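/- arXiv:2508.10018 — 3 statements merged into one kernel-verified Lean document; each statement's English description precedes it below -/
import Mathlib

section
/- (Enriched Yoneda Lemma for [0,1]-categories.) Let X be a [0,1]-enriched category with hom d : X → X → [0,1], let x be an object of X, and let f be any [0,1]-enriched copresheaf on X. Then D(d(x, -), f) = f(x), i.e. the infimum over all c in X of [d(x, c), f(c)] equals f(x). In particular the Yoneda copresheaf d(x, -) represents evaluation at x. -/
instance : Fact ((0 : ℝ) ≤ 1) := ⟨zero_le_one⟩

/-- The truncated division internal hom on the unit interval `[0,1]`:
`ihom a b = min 1 (b / a)` when `a ≠ 0`, and `ihom a b = 1` when `a = 0`. -/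
noncomputable def ihom (a b : unitInterval) : unitInterval :=
  if (a : ℝ) = 0 then 1
  else ⟨min 1 ((b : ℝ) / (a : ℝ)),
    le_min zero_le_one (div_nonneg b.2.1 a.2.1), min_le_left _ _⟩

/-- `f : X → [0,1]` is a `[0,1]`-enriched copresheaf on `(X, d)`. -/
def IsCopresheaf {X : Type*} (d : X → X → unitInterval) (f : X → unitInterval) : Prop :=
  ∀ x y, d x y ≤ ihom (f x) (f y)

/-- The hom between copresheaves: `D f g = ⨅ c, [f c, g c]`, the infimum being
taken in the complete lattice `[0,1]`. -/
noncomputable def D {X : Type*} (f g : X → unitInterval) : unitInterval :=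
  ⨅ c, ihom (f c) (g c)

lemma le_ihom_iff (a b c : unitInterval) : a ≤ ihom b c ↔ (a : ℝ) * b ≤ c := by
  unfold ihom
  by_cases hb : (b : ℝ) = 0
  · simp [hb, a.2.2, unitInterval.le_one', c.2.1]
  · have hb' : 0 < (b : ℝ) := lt_of_le_of_ne b.2.1 (Ne.symm hb)
    rw [if_neg hb]
    rw [← Subtype.coe_le_coe]
    simp only [Subtype.coe_mk, le_min_iff]
    constructor
    · rintro ⟨_, h⟩
      exact (div_le_div_iff₀ (by norm_num : (0:ℝ) < 1) hb').mp (by simpa using h) |>.trans_eq (by ring) |>.trans_eq rfl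
    · intro h
      exact ⟨a.2.2, (le_div_iff₀ hb').mpr h⟩

lemma ihom_one (b : unitInterval) : ihom 1 b = b := by
  unfold ihom
  rw [if_neg (by norm_num)]
  ext
  simp [b.2.2]

/-- Enriched Yoneda Lemma for `[0,1]`-categories: for any object `x` of a
`[0,1]`-enriched category `(X, d)` and any `[0,1]`-enriched copresheaf `f`,
`D (d x ·) f = f x`: the Yoneda copresheaf represents evaluation at `x`. -/
theorem enriched_yoneda (X : Type*) (d : X → X → unitInterval)
    (hrefl : ∀ x, 1 ≤ d x x)
    (hcomp : ∀ x y z, d y z * d x y ≤ d x z)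
    (x : X) (f : X → unitInterval) (hf : IsCopresheaf d f) :
    D (fun c => d x c) f = f x := by
  have hdxx : d x x = 1 := le_antisymm unitInterval.le_one' (hrefl x)
  apply le_antisymm
  · calc D (fun c => d x c) f ≤ ihom (d x x) (f x) := iInf_le _ x
    _ = f x := by rw [hdxx, ihom_one]
  · apply le_iInf
    intro c
    rw [le_ihom_iff]
    have h := (le_ihom_iff (d x c) (f x) (f c)).mp (hf x c)
    calc (f x : ℝ) * (d x c) = (d x c : ℝ) * (f x) := by ring
    _ ≤ f c := h
end

section
/- Let X be a [0,1]-enriched category with hom d : X → X → [0,1]. Then for all objects x, y of X, the hom between the Yoneda copresheaves recovers the original hom with arguments reversed: D(d(x, -), d(y, -)) = d(y, x), i.e. the infimum over all c in X of [d(x, c), d(y, c)] equals d(y, x). -/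
/-- For a `[0,1]`-enriched category `(X, d)`, the hom between Yoneda
copresheaves recovers the original hom with arguments reversed:
`D (d x ·) (d y ·) = d y x`. -/
theorem yoneda_hom_eq (X : Type*) (d : X → X → unitInterval)
    (hrefl : ∀ x, 1 ≤ d x x)
    (hcomp : ∀ x y z, d y z * d x y ≤ d x z)
    (x y : X) :
    D (fun c => d x c) (fun c => d y c) = d y x := by
  have hdxx : d x x = 1 := le_antisymm unitInterval.le_one' (hrefl x)
  refine le_antisymm ?_ ?_
  · have := iInf_le (fun c => ihom (d x c) (d y c)) x
    simpa [D, hdxx, ihom_one] using this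
  · refine le_iInf fun c => ?_
    unfold ihom
    split_ifs with h
    · exact unitInterval.le_one'
    · rw [← Subtype.coe_le_coe]
      refine le_min (unitInterval.le_one _) ?_
      rw [le_div_iff₀ (lt_of_le_of_ne (d x c).2.1 (Ne.symm h))]
      have := hcomp y x c
      rw [← Subtype.coe_le_coe] at this
      simpa [mul_comm] using this
end

section
/- The category of compactly generated weak Hausdorff topological spaces, with continuous maps as morphisms and with products given by the compactly generated refinement of the product topology, is Cartesian closed: for every object X the functor X × − has a right adjoint, given by the mapping space with the compactly generated refinement of the compact-open topology. -/
open Topology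

universe u

/-- A topological space is weak Hausdorff if the image of every continuous map
from a compact Hausdorff space is closed. -/
def WeakHausdorff (α : Type u) [TopologicalSpace α] : Prop :=
  ∀ (K : Type u) [TopologicalSpace K] [CompactSpace K] [T2Space K] (f : C(K, α)),
    IsClosed (Set.range f)

/-- A topological space is compactly generated if a subset is closed whenever its
preimage under every continuous map from a compact Hausdorff space is closed. -/
def CompactlyGeneratedSp (α : Type u) [TopologicalSpace α] : Prop :=
  ∀ s : Set α,
    (∀ (K : Type u) [TopologicalSpace K] [CompactSpace K] [T2Space K] (f : C(K, α)),
      IsClosed (f ⁻¹' s)) → IsClosed s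

/-- The compactly generated refinement (`k`-ification) of a topology: the final
topology with respect to all continuous maps from compact Hausdorff spaces. -/
def kification (α : Type u) (t : TopologicalSpace α) : TopologicalSpace α :=
  ⨆ (K : Type u) (tK : TopologicalSpace K) (_ : @CompactSpace K tK)
    (_ : @T2Space K tK) (f : @ContinuousMap K α tK t),
      TopologicalSpace.coinduced f.toFun tK

/-- Composition of continuous maps, with explicit topologies. -/
lemma cont_comp {α β γ : Type*} {t1 : TopologicalSpace α} {t2 : TopologicalSpace β}
    {t3 : TopologicalSpace γ} {g : β → γ} {f : α → β}
    (hg : Continuous[t2, t3] g) (hf : Continuous[t1, t2] f) :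
    Continuous[t1, t3] fun x => g (f x) := by
  rw [continuous_def] at *
  intro s hs
  exact hf _ (hg _ hs)

/-- The kification is finer than the original topology. -/
lemma kification_le {α : Type u} (t : TopologicalSpace α) : kification α t ≤ t := by
  refine iSup_le fun K => iSup_le fun tK => iSup_le fun _ => iSup_le fun _ => iSup_le fun f => ?_
  exact continuous_iff_coinduced_le.mp f.continuous

/-- Any continuous map from a compact Hausdorff space is continuous into the kification. -/
lemma probe_continuous_kification {α : Type u} {K : Type u} [tK : TopologicalSpace K]
    [hc : CompactSpace K] [ht : T2Space K] [t : TopologicalSpace α] (f : C(K, α)) :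
    Continuous[tK, kification α t] f := by
  rw [continuous_iff_coinduced_le]
  exact le_iSup_of_le K <| le_iSup_of_le tK <| le_iSup_of_le hc <| le_iSup_of_le ht <|
    le_iSup (fun g : C(K, α) => TopologicalSpace.coinduced g.toFun tK) f

/-- A map out of a compactly generated space is continuous provided its composites
with all probes from compact Hausdorff spaces are continuous. -/
lemma cg_continuous {α β : Type u} [tα : TopologicalSpace α] (hα : CompactlyGeneratedSp α)
    (tβ : TopologicalSpace β) {f : α → β}
    (h : ∀ (K : Type u) [tK : TopologicalSpace K] [CompactSpace K] [T2Space K] (p : C(K, α)),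
      Continuous[tK, tβ] (f ∘ p)) : Continuous[tα, tβ] f := by
  rw [continuous_iff_isClosed]
  intro s hs
  refine hα _ fun K _ _ _ p => ?_
  exact (continuous_iff_isClosed.mp (h K p)) s hs

/-- Strickland's Proposition: a "k-open" subset of `K × X` with `K` compact Hausdorff
and `X` compactly generated is open in the product topology. -/
lemma kopen_isOpen {K X : Type u} [tK : TopologicalSpace K] [CompactSpace K] [T2Space K]
    [tX : TopologicalSpace X] (hX : CompactlyGeneratedSp X) {W : Set (K × X)}
    (hW : ∀ (L : Type u) [TopologicalSpace L] [CompactSpace L] [T2Space L] (p : C(L, K × X)),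
      IsOpen (p ⁻¹' W)) : IsOpen W := by
  rw [isOpen_iff_mem_nhds]
  rintro ⟨a, b⟩ hab
  have hslice : IsOpen {k : K | (k, b) ∈ W} :=
    hW K ⟨fun k => (k, b), continuous_id.prodMk continuous_const⟩
  obtain ⟨A, hA_nhds, hA_sub, hA_cpt⟩ :=
    local_compact_nhds (hslice.mem_nhds (hab : a ∈ {k : K | (k, b) ∈ W}))
  haveI : CompactSpace A := isCompact_iff_compactSpace.mp hA_cpt
  set V := {x : X | ∀ k ∈ A, (k, x) ∈ W} with hVdef
  have hbV : b ∈ V := fun k hk => hA_sub hk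
  have hVopen : IsOpen V := by
    rw [← isClosed_compl_iff]
    refine hX Vᶜ fun L _ _ _ u => ?_
    have hq : Continuous fun q : A × L => ((q.1 : K), u q.2) :=
      (continuous_subtype_val.comp continuous_fst).prodMk (u.continuous.comp continuous_snd)
    have key : u ⁻¹' Vᶜ = Prod.snd '' ((fun q : A × L => ((q.1 : K), u q.2)) ⁻¹' Wᶜ) := by
      ext l
      constructor
      · intro hl
        rw [Set.mem_preimage, Set.mem_compl_iff, hVdef, Set.mem_setOf_eq] at hl
        push_neg at hl
        obtain ⟨k, hkA, hk⟩ := hl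
        exact ⟨(⟨k, hkA⟩, l), hk, rfl⟩
      · rintro ⟨⟨⟨k, hkA⟩, l'⟩, hk, rfl⟩
        intro hl
        exact hk (hl k hkA)
    rw [key]
    have hcl : IsClosed ((fun q : A × L => ((q.1 : K), u q.2)) ⁻¹' Wᶜ) := by
      rw [Set.preimage_compl]
      exact (hW (A × L) ⟨_, hq⟩).isClosed_compl
    exact isClosedMap_snd_of_compactSpace _ hcl
  refine Filter.mem_of_superset
    ((isOpen_interior.prod hVopen).mem_nhds
      ⟨mem_interior_iff_mem_nhds.mpr hA_nhds, hbV⟩) ?_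
  rintro ⟨k, x⟩ ⟨hk, hx⟩
  exact hx k (interior_subset hk)

/-- The key for the forward direction: partially composing a kification-continuous map
with a probe yields a map continuous on the honest product. -/
lemma curry_probe {X Z Y : Type u} [tX : TopologicalSpace X] [tZ : TopologicalSpace Z]
    [tY : TopologicalSpace Y] (hX : CompactlyGeneratedSp X)
    {f : Z × X → Y} (hf : Continuous[kification (Z × X) instTopologicalSpaceProd, tY] f)
    {K : Type u} [tK : TopologicalSpace K] [CompactSpace K] [T2Space K] (c : C(K, Z)) :
    Continuous fun p : K × X => f (c p.1, p.2) := by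
  rw [continuous_def]
  intro U hU
  refine kopen_isOpen hX fun L _ _ _ p => ?_
  have h1 : Continuous fun l : L => ((c (p l).1 : Z), (p l).2) :=
    (c.continuous.comp (continuous_fst.comp p.continuous)).prodMk
      (continuous_snd.comp p.continuous)
  have h2 : Continuous[_, kification (Z × X) instTopologicalSpaceProd]
      fun l : L => ((c (p l).1 : Z), (p l).2) :=
    probe_continuous_kification ⟨_, h1⟩
  exact (cont_comp hf h2).isOpen_preimage U hU

/-- The key for the backward direction. -/
lemma backward_probe {X Z Y : Type u} [tX : TopologicalSpace X] [tZ : TopologicalSpace Z]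
    [tY : TopologicalSpace Y] {K : Type u} [tK : TopologicalSpace K] [CompactSpace K] [T2Space K]
    {g : Z → C(X, Y)} (hg : Continuous[tZ, kification C(X, Y) ContinuousMap.compactOpen] g)
    (p : C(K, Z × X)) : Continuous fun k => g (p k).1 (p k).2 := by
  have ha : Continuous fun k => g (p k).1 :=
    continuous_le_rng (kification_le _) (cont_comp hg (continuous_fst.comp p.continuous))
  have hb : Continuous fun k => (p k).2 := continuous_snd.comp p.continuous
  have hm : Continuous fun k => (g (p k).1).comp (⟨_, hb⟩ : C(K, X)) :=
    (ContinuousMap.continuous_precomp _).comp ha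
  exact (hm.eval continuous_id :
    Continuous fun k => ((g (p k).1).comp (⟨_, hb⟩ : C(K, X))) k)

/-- The category of compactly generated weak Hausdorff spaces, with products the
compactly generated refinement of the product topology, is Cartesian closed:
for compactly generated weak Hausdorff spaces `X`, `Z`, `Y`, currying gives a
(natural) bijection between the continuous maps `Z × X → Y` (where `Z × X`
carries the compactly generated refinement of the product topology) and the
continuous maps from `Z` to the mapping space `C(X, Y)` endowed with the
compactly generated refinement of the compact-open topology; i.e. `X × -` has a
right adjoint given by the refined mapping space. -/
theorem cgwh_cartesianClosed
    (X Z Y : Type u) [tX : TopologicalSpace X] [tZ : TopologicalSpace Z]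
    [tY : TopologicalSpace Y]
    (hX : CompactlyGeneratedSp X ∧ WeakHausdorff X)
    (hZ : CompactlyGeneratedSp Z ∧ WeakHausdorff Z)
    (hY : CompactlyGeneratedSp Y ∧ WeakHausdorff Y) :
    ∃ e : { f : Z × X → Y //
            Continuous[kification (Z × X) instTopologicalSpaceProd, tY] f } ≃
          { g : Z → C(X, Y) //
            Continuous[tZ, kification C(X, Y) ContinuousMap.compactOpen] g },
      ∀ f z x, ((e f : { g : Z → C(X, Y) //
            Continuous[tZ, kification C(X, Y) ContinuousMap.compactOpen] g }) : Z → C(X, Y)) z x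
          = (f : Z × X → Y) (z, x) := by
  obtain ⟨hXc, _⟩ := hX
  obtain ⟨hZc, _⟩ := hZ
  -- each slice of a kification-continuous map is continuous
  have memC : ∀ (f : Z × X → Y),
      Continuous[kification (Z × X) instTopologicalSpaceProd, tY] f →
      ∀ z, Continuous fun x => f (z, x) := by
    intro f hf z
    refine cg_continuous hXc tY ?_
    intro L tL _ _ u
    have h1 : Continuous fun l : L => ((z : Z), u l) :=
      continuous_const.prodMk u.continuous
    have h2 : Continuous[_, kification (Z × X) instTopologicalSpaceProd]
        fun l : L => ((z : Z), u l) := probe_continuous_kification ⟨_, h1⟩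
    have h3 : Continuous[tL, tY] fun l : L => f ((z : Z), u l) := cont_comp hf h2
    exact h3
  -- currying is continuous
  have gcont : ∀ (f : Z × X → Y)
      (hf : Continuous[kification (Z × X) instTopologicalSpaceProd, tY] f),
      Continuous[tZ, kification C(X, Y) ContinuousMap.compactOpen]
        fun z => (⟨fun x => f (z, x), memC f hf z⟩ : C(X, Y)) := by
    intro f hf
    refine cg_continuous hZc _ ?_
    intro K tK _ _ c
    have hcur : Continuous fun p : K × X => f (c p.1, p.2) := curry_probe hXc hf c
    have h1 : Continuous fun k : K => (⟨fun x => f (c k, x), memC f hf (c k)⟩ : C(X, Y)) := by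
      have heq : (fun k : K => (⟨fun x => f (c k, x), memC f hf (c k)⟩ : C(X, Y)))
          = fun k => ContinuousMap.curry ⟨_, hcur⟩ k :=
        funext fun k => ContinuousMap.ext fun x => rfl
      rw [heq]
      exact (ContinuousMap.curry ⟨_, hcur⟩).continuous
    exact probe_continuous_kification (⟨_, h1⟩ : C(K, C(X, Y)))
  -- uncurrying is continuous
  have fcont : ∀ (g : Z → C(X, Y))
      (hg : Continuous[tZ, kification C(X, Y) ContinuousMap.compactOpen] g),
      Continuous[kification (Z × X) instTopologicalSpaceProd, tY]
        fun q : Z × X => g q.1 q.2 := by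
    intro g hg
    rw [kification]
    refine continuous_iSup_dom.mpr fun K => continuous_iSup_dom.mpr fun tK =>
      continuous_iSup_dom.mpr fun h1 => continuous_iSup_dom.mpr fun h2 =>
      continuous_iSup_dom.mpr fun p => continuous_coinduced_dom.mpr ?_
    exact @backward_probe X Z Y tX tZ tY K tK h1 h2 g hg p
  refine ⟨⟨fun F => ⟨fun z => ⟨fun x => F.1 (z, x), memC F.1 F.2 z⟩, gcont F.1 F.2⟩,
    fun G => ⟨fun q => (G.1 q.1) q.2, fcont G.1 G.2⟩,
    fun F => Subtype.ext (funext fun q => by cases q; rfl),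
    fun G => Subtype.ext (funext fun z => ContinuousMap.ext fun x => rfl)⟩,
    fun F z x => rfl⟩
end
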